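/- Let ε = (ε_1,…,ε_n) ∈ H^n and let τ ∈ T_n be a segmentation. Then ‖Π_τ ε‖² ≤ 4 D_τ M_n² / (n Λ̲_τ), where M_n := max_{1≤k≤n} ‖Σ_{j=1}^k ε_j‖_H. -/

import Mathlib

open MeasureTheory ProbabilityTheory

/-- A segmentation of `{1, …, n}` with `D` segments: integers
`0 = t 0 < t 1 < ⋯ < t D = n`. -/
structure Seg (n : ℕ) where
  D : ℕ
  t : ℕ → ℕ
  hD : 0 < D
  h0 : t 0 = 0
  hn : t D = n
  hmono : ∀ ℓ < D, t ℓ < t (ℓ + 1)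

namespace Seg

variable {n : ℕ}

/-- The `ℓ`-th segment (`0`-based) of a segmentation, as a set of `0`-based indices:
it corresponds to the paper's segment `λ_{ℓ+1} = {t ℓ + 1, …, t (ℓ+1)}` (1-based). -/
def seg (τ : Seg n) (ℓ : ℕ) : Finset (Fin n) :=
  Finset.univ.filter fun j => τ.t ℓ ≤ (j : ℕ) ∧ (j : ℕ) < τ.t (ℓ + 1)

/-- `Λ̲_τ`: normalized size of the smallest segment. -/
noncomputable def lamMin (τ : Seg n) : ℝ :=
  (((Finset.range τ.D).inf' (Finset.nonempty_range_iff.mpr τ.hD.ne')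
      fun ℓ => τ.t (ℓ + 1) - τ.t ℓ : ℕ) : ℝ) / n

/-- `Λ̄_τ`: normalized size of the largest segment. -/
noncomputable def lamMax (τ : Seg n) : ℝ :=
  (((Finset.range τ.D).sup' (Finset.nonempty_range_iff.mpr τ.hD.ne')
      fun ℓ => τ.t (ℓ + 1) - τ.t ℓ : ℕ) : ℝ) / n

/-- `d∞^{(1)}(τ¹,τ²) = max_{1 ≤ i ≤ D₁−1} min_{1 ≤ j ≤ D₂−1} |τ¹_i − τ²_j|`
(with natural conventions in the degenerate cases where a segmentation has no
interior change-point). -/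
noncomputable def dinf1 (τ1 τ2 : Seg n) : ℕ :=
  if h : 2 ≤ τ1.D ∧ 2 ≤ τ2.D then
    (Finset.Ioo 0 τ1.D).sup fun i =>
      (Finset.Ioo 0 τ2.D).inf' ⟨1, Finset.mem_Ioo.mpr ⟨Nat.one_pos, by omega⟩⟩
        fun j => Nat.dist (τ1.t i) (τ2.t j)
  else if τ1.D = τ2.D then 0 else n

/-- `d∞^{(2)}(τ¹,τ²) = max_{1 ≤ i ≤ D₁−1} min_{0 ≤ j ≤ D₂} |τ¹_i − τ²_j|`. -/
noncomputable def dinf2 (τ1 τ2 : Seg n) : ℕ :=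
  (Finset.Ioo 0 τ1.D).sup fun i =>
    (Finset.Icc 0 τ2.D).inf' ⟨0, Finset.mem_Icc.mpr ⟨le_rfl, Nat.zero_le _⟩⟩
      fun j => Nat.dist (τ1.t i) (τ2.t j)

/-- `d∞^{(3)}(τ¹,τ²) = max_{1 ≤ i ≤ D₁−1} |τ¹_i − τ²_i|` (meaningful when `D₁ = D₂`). -/
noncomputable def dinf3 (τ1 τ2 : Seg n) : ℕ :=
  (Finset.Ioo 0 τ1.D).sup fun i => Nat.dist (τ1.t i) (τ2.t i)

/-- `d_H^{(1)}`. -/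
noncomputable def dH1 (τ1 τ2 : Seg n) : ℕ := max (dinf1 τ1 τ2) (dinf1 τ2 τ1)

/-- `d_H^{(2)}`. -/
noncomputable def dH2 (τ1 τ2 : Seg n) : ℕ := max (dinf2 τ1 τ2) (dinf2 τ2 τ1)

/-- The matrix of the orthogonal projection `Π_τ`:
`(Π_τ)_{ij} = 1/|λ|` if `i, j` are in the same segment `λ` of `τ`, and `0` otherwise. -/
noncomputable def Pmat (τ : Seg n) : Fin n → Fin n → ℝ := fun i j =>
  ∑ ℓ ∈ Finset.range τ.D, if i ∈ τ.seg ℓ ∧ j ∈ τ.seg ℓ then ((τ.seg ℓ).card : ℝ)⁻¹ else 0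

/-- The Frobenius loss `d_F(τ¹,τ²) = ‖Π_{τ¹} − Π_{τ²}‖_F`. -/
noncomputable def dF (τ1 τ2 : Seg n) : ℝ :=
  Real.sqrt (∑ i, ∑ j, (Pmat τ1 i j - Pmat τ2 i j) ^ 2)

/-- The orthogonal projection `Π_τ : H^n → H^n` onto vectors constant on each segment
of `τ`: `(Π_τ x)_i` is the average of `x` over the segment of `τ` containing `i`. -/
noncomputable def proj {H : Type*} [AddCommGroup H] [Module ℝ H]
    (τ : Seg n) (x : Fin n → H) : Fin n → H := fun i =>
  ∑ ℓ ∈ Finset.range τ.D,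
    if τ.t ℓ ≤ (i : ℕ) ∧ (i : ℕ) < τ.t (ℓ + 1)
    then (((τ.t (ℓ + 1) - τ.t ℓ : ℕ) : ℝ))⁻¹ • ∑ j ∈ τ.seg ℓ, x j
    else 0

end Seg

/-- Squared norm on `H^n`: `‖x‖² = Σ_i ‖x_i‖²`. -/
noncomputable def hnorm2 {n : ℕ} {H : Type*} [NormedAddCommGroup H] (x : Fin n → H) : ℝ :=
  ∑ i, ‖x i‖ ^ 2

/-- Inner product on `H^n`: `⟨x, y⟩ = Σ_i ⟨x_i, y_i⟩_H`. -/
noncomputable def hinner {n : ℕ} {H : Type*} [NormedAddCommGroup H] [InnerProductSpace ℝ H]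
    (x y : Fin n → H) : ℝ := ∑ i, inner ℝ (x i) (y i)

/-- `τ` is the true segmentation of `m ∈ H^n`: `m` is constant on every segment of `τ`
and jumps at every interior change-point of `τ`. -/
def IsTrueSeg {n : ℕ} {H : Type*} (τ : Seg n) (m : Fin n → H) : Prop :=
  (∀ ℓ < τ.D, ∀ i ∈ τ.seg ℓ, ∀ j ∈ τ.seg ℓ, m i = m j) ∧
  ∀ ℓ, 0 < ℓ → ℓ < τ.D → ∀ (h1 : τ.t ℓ - 1 < n) (h2 : τ.t ℓ < n),
    m ⟨τ.t ℓ - 1, h1⟩ ≠ m ⟨τ.t ℓ, h2⟩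

/-- The size `‖μ*_{t ℓ + 1} − μ*_{t ℓ}‖` (paper indexing) of the jump of `m` at
the change-point `t ℓ` of `τ`. -/
noncomputable def jumpAt {n : ℕ} {H : Type*} [NormedAddCommGroup H]
    (τ : Seg n) (m : Fin n → H) (ℓ : ℕ) : ℝ :=
  if h : 0 < τ.t ℓ ∧ τ.t ℓ < n then ‖m ⟨τ.t ℓ, h.2⟩ - m ⟨τ.t ℓ - 1, by omega⟩‖ else 0

/-- `Δ̲`: size of the smallest jump of `m` (over the change-points of `τ`). -/
noncomputable def deltaMin {n : ℕ} {H : Type*} [NormedAddCommGroup H]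
    (τ : Seg n) (m : Fin n → H) : ℝ :=
  if h : 2 ≤ τ.D then
    (Finset.Ioo 0 τ.D).inf' ⟨1, Finset.mem_Ioo.mpr ⟨Nat.one_pos, by omega⟩⟩ (jumpAt τ m)
  else 0

/-- `Δ̄`: size of the largest jump of `m` (over the change-points of `τ`). -/
noncomputable def deltaMax {n : ℕ} {H : Type*} [NormedAddCommGroup H]
    (τ : Seg n) (m : Fin n → H) : ℝ :=
  if h : 2 ≤ τ.D then
    (Finset.Ioo 0 τ.D).sup' ⟨1, Finset.mem_Ioo.mpr ⟨Nat.one_pos, by omega⟩⟩ (jumpAt τ m)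
  else 0

/-- The value of `m` at the first index of the `ℓ`-th segment of `τ`; if `m` is constant
on each segment of `τ`, this is the common value `μ*_{λ_ℓ}` of `m` on that segment. -/
noncomputable def segVal {n : ℕ} {H : Type*} [AddCommGroup H]
    (τ : Seg n) (m : Fin n → H) (ℓ : ℕ) : H :=
  if h : τ.t ℓ < n then m ⟨τ.t ℓ, h⟩ else 0

/-- `M_n = max_{1 ≤ k ≤ n} ‖ε_1 + ⋯ + ε_k‖` (the value at `k = 0` is `0`, which does not
affect the maximum). -/
noncomputable def Mmax {n : ℕ} {H : Type*} [NormedAddCommGroup H] (ε : Fin n → H) : ℝ :=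
  (Finset.range (n + 1)).sup' (Finset.nonempty_range_iff.mpr (Nat.succ_ne_zero n))
    fun k => ‖∑ j ∈ Finset.univ.filter (fun j : Fin n => (j : ℕ) < k), ε j‖

/-! Each coordinate of `Π_τ ε` on a segment `λ` is the mean `|λ|⁻¹ Σ_{j∈λ} ε_j`, so
`‖Π_τ ε‖² = Σ_λ ‖Σ_{j∈λ} ε_j‖² / |λ|`. The sum over a segment is a difference of two
prefix sums, hence has norm at most `2 M_n`, and every segment has at least `n Λ̲_τ`
points; summing the resulting bound `4 M_n² / (n Λ̲_τ)` over the `D_τ` segments gives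
the claim. -/

open Finset

lemma norm_sum_lt_le_Mmax {n : ℕ} {H : Type*} [NormedAddCommGroup H] (ε : Fin n → H)
    {k : ℕ} (hk : k ≤ n) : ‖∑ j ∈ univ.filter (fun j : Fin n => (j : ℕ) < k), ε j‖ ≤ Mmax ε :=
  le_sup' (fun k => ‖∑ j ∈ univ.filter (fun j : Fin n => (j : ℕ) < k), ε j‖)
    (mem_range.2 (Nat.lt_succ_of_le hk))

namespace Seg

variable {n : ℕ} (τ : Seg n)

lemma strictMonoOn_t : StrictMonoOn τ.t (Set.Iic τ.D) :=
  strictMonoOn_Iic_of_lt_succ τ.hmono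

lemma t_le_t {a b : ℕ} (hab : a ≤ b) (hb : b ≤ τ.D) : τ.t a ≤ τ.t b :=
  τ.strictMonoOn_t.monotoneOn (Set.mem_Iic.2 (hab.trans hb)) (Set.mem_Iic.2 hb) hab

lemma t_le_n {ℓ : ℕ} (hℓ : ℓ ≤ τ.D) : τ.t ℓ ≤ n :=
  (τ.t_le_t hℓ le_rfl).trans_eq τ.hn

lemma n_pos (τ : Seg n) : 0 < n := by
  simpa [τ.h0, τ.hn] using
    τ.strictMonoOn_t (Set.mem_Iic.2 (Nat.zero_le _)) (Set.mem_Iic.2 le_rfl) τ.hD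

lemma mem_seg {ℓ : ℕ} {i : Fin n} : i ∈ τ.seg ℓ ↔ τ.t ℓ ≤ i ∧ (i : ℕ) < τ.t (ℓ + 1) := by
  simp [seg]

lemma eq_of_mem_seg {ℓ ℓ' : ℕ} (hℓ : ℓ < τ.D) (hℓ' : ℓ' < τ.D) {i : Fin n}
    (hi : i ∈ τ.seg ℓ) (hi' : i ∈ τ.seg ℓ') : ℓ = ℓ' := by
  rw [mem_seg] at hi hi'
  by_contra hne
  rcases Nat.lt_or_gt_of_ne hne with h | h
  · have := τ.t_le_t (show ℓ + 1 ≤ ℓ' from h) hℓ'.le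
    omega
  · have := τ.t_le_t (show ℓ' + 1 ≤ ℓ from h) hℓ.le
    omega

lemma pairwiseDisjoint_seg : (range τ.D : Set ℕ).PairwiseDisjoint τ.seg :=
  fun _ hℓ _ hℓ' hne => Finset.disjoint_left.2 fun _ hi hi' =>
    hne (τ.eq_of_mem_seg (mem_range.1 hℓ) (mem_range.1 hℓ') hi hi')

lemma exists_mem_seg_of_lt_t {k : ℕ} (hk : k ≤ τ.D) (i : Fin n) (hi : (i : ℕ) < τ.t k) :
    ∃ ℓ < k, i ∈ τ.seg ℓ := by
  induction k with
  | zero => simp [τ.h0] at hi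
  | succ k ih =>
    by_cases hik : (i : ℕ) < τ.t k
    · obtain ⟨ℓ, hℓ, hmem⟩ := ih (by omega) hik
      exact ⟨ℓ, by omega, hmem⟩
    · exact ⟨k, by omega, τ.mem_seg.2 ⟨by omega, hi⟩⟩

lemma biUnion_seg : (range τ.D).biUnion τ.seg = univ := by
  refine eq_univ_of_forall fun i => mem_biUnion.2 ?_
  obtain ⟨ℓ, hℓ, hi⟩ := τ.exists_mem_seg_of_lt_t le_rfl i (by rw [τ.hn]; exact i.2)
  exact ⟨ℓ, mem_range.2 hℓ, hi⟩

lemma card_seg {ℓ : ℕ} (hℓ : ℓ < τ.D) : #(τ.seg ℓ) = τ.t (ℓ + 1) - τ.t ℓ := by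
  rw [← Nat.card_Ico]
  refine card_bij (fun j _ => (j : ℕ)) (fun j hj => mem_Ico.2 (τ.mem_seg.1 hj))
    (fun _ _ _ _ => Fin.ext) fun m hm => ?_
  have hm' := mem_Ico.1 hm
  exact ⟨⟨m, hm'.2.trans_le (τ.t_le_n hℓ)⟩, τ.mem_seg.2 hm', rfl⟩

lemma proj_apply_of_mem_seg {H : Type*} [AddCommGroup H] [Module ℝ H] (x : Fin n → H)
    {ℓ : ℕ} (hℓ : ℓ < τ.D) {i : Fin n} (hi : i ∈ τ.seg ℓ) :
    τ.proj x i = (#(τ.seg ℓ) : ℝ)⁻¹ • ∑ j ∈ τ.seg ℓ, x j := by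
  rw [proj, sum_eq_single_of_mem ℓ (mem_range.2 hℓ), if_pos (τ.mem_seg.1 hi), τ.card_seg hℓ]
  intro ℓ' hℓ' hne
  exact if_neg fun hi' => hne (τ.eq_of_mem_seg (mem_range.1 hℓ') hℓ (τ.mem_seg.2 hi') hi)

lemma sum_seg_eq_sub {H : Type*} [AddCommGroup H] (x : Fin n → H) {ℓ : ℕ} (hℓ : ℓ < τ.D) :
    ∑ j ∈ τ.seg ℓ, x j = ∑ j ∈ univ.filter (fun j : Fin n => (j : ℕ) < τ.t (ℓ + 1)), x j -
      ∑ j ∈ univ.filter (fun j : Fin n => (j : ℕ) < τ.t ℓ), x j := by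
  have hlt := τ.hmono ℓ hℓ
  rw [eq_sub_iff_add_eq, ← sum_union]
  · congr 1
    ext j
    simp only [mem_union, mem_seg, mem_filter, mem_univ, true_and]
    omega
  · refine Finset.disjoint_left.2 fun j hj hj' => ?_
    rw [mem_seg] at hj
    rw [mem_filter] at hj'
    omega

lemma norm_sum_seg_le_two_mul_Mmax {H : Type*} [NormedAddCommGroup H] (ε : Fin n → H)
    {ℓ : ℕ} (hℓ : ℓ < τ.D) : ‖∑ j ∈ τ.seg ℓ, ε j‖ ≤ 2 * Mmax ε := by
  rw [τ.sum_seg_eq_sub ε hℓ, two_mul]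
  exact (norm_sub_le _ _).trans
    (add_le_add (norm_sum_lt_le_Mmax ε (τ.t_le_n hℓ)) (norm_sum_lt_le_Mmax ε (τ.t_le_n hℓ.le)))

lemma hnorm2_proj {H : Type*} [NormedAddCommGroup H] [NormedSpace ℝ H] (x : Fin n → H) :
    hnorm2 (τ.proj x) = ∑ ℓ ∈ range τ.D, ‖∑ j ∈ τ.seg ℓ, x j‖ ^ 2 / #(τ.seg ℓ) := by
  classical
  rw [hnorm2, ← τ.biUnion_seg, sum_biUnion τ.pairwiseDisjoint_seg]
  refine sum_congr rfl fun ℓ hℓ => ?_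
  replace hℓ := mem_range.1 hℓ
  have hcard : (0 : ℝ) < #(τ.seg ℓ) := by
    rw [τ.card_seg hℓ]
    exact_mod_cast Nat.sub_pos_of_lt (τ.hmono ℓ hℓ)
  rw [sum_congr rfl fun i hi => by rw [τ.proj_apply_of_mem_seg x hℓ hi],
    sum_const, nsmul_eq_mul, norm_smul, norm_inv, Real.norm_natCast]
  field_simp

def minLen : ℕ :=
  (range τ.D).inf' (nonempty_range_iff.2 τ.hD.ne') fun ℓ => τ.t (ℓ + 1) - τ.t ℓ

lemma minLen_pos : 0 < τ.minLen :=
  (lt_inf'_iff _).2 fun ℓ hℓ => Nat.sub_pos_of_lt (τ.hmono ℓ (mem_range.1 hℓ))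

lemma minLen_le_card_seg {ℓ : ℕ} (hℓ : ℓ < τ.D) : τ.minLen ≤ #(τ.seg ℓ) :=
  τ.card_seg hℓ ▸ inf'_le _ (mem_range.2 hℓ)

lemma n_mul_lamMin : (n : ℝ) * τ.lamMin = τ.minLen := by
  rw [lamMin, mul_div_cancel₀]
  · rfl
  · exact_mod_cast τ.n_pos.ne'

lemma sq_norm_sum_seg_div_card_le {H : Type*} [NormedAddCommGroup H] (ε : Fin n → H)
    {ℓ : ℕ} (hℓ : ℓ < τ.D) :
    ‖∑ j ∈ τ.seg ℓ, ε j‖ ^ 2 / #(τ.seg ℓ) ≤ 4 * Mmax ε ^ 2 / τ.minLen := by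
  calc ‖∑ j ∈ τ.seg ℓ, ε j‖ ^ 2 / #(τ.seg ℓ) ≤ (2 * Mmax ε) ^ 2 / τ.minLen :=
        div_le_div₀ (by positivity)
          (pow_le_pow_left₀ (norm_nonneg _) (τ.norm_sum_seg_le_two_mul_Mmax ε hℓ) 2)
          (by exact_mod_cast τ.minLen_pos) (by exact_mod_cast τ.minLen_le_card_seg hℓ)
    _ = 4 * Mmax ε ^ 2 / τ.minLen := by ring

end Seg

/-- Lemma 5.5: `‖Π_τ ε‖² ≤ 4 D_τ M_n² / (n Λ̲_τ)` where
`M_n = max_{1 ≤ k ≤ n} ‖Σ_{j=1}^k ε_j‖`. -/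
theorem quadratic_term_deterministic_bound {H : Type*}
    [NormedAddCommGroup H] [InnerProductSpace ℝ H]
    {n : ℕ} (τ : Seg n) (ε : Fin n → H) :
    hnorm2 (Seg.proj τ ε) ≤ 4 * (τ.D : ℝ) * (Mmax ε) ^ 2 / (n * Seg.lamMin τ) := by
  calc hnorm2 (τ.proj ε) = ∑ ℓ ∈ range τ.D, ‖∑ j ∈ τ.seg ℓ, ε j‖ ^ 2 / #(τ.seg ℓ) :=
        τ.hnorm2_proj ε
    _ ≤ ∑ _ℓ ∈ range τ.D, 4 * Mmax ε ^ 2 / τ.minLen :=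
        sum_le_sum fun ℓ hℓ => τ.sq_norm_sum_seg_div_card_le ε (mem_range.1 hℓ)
    _ = 4 * τ.D * Mmax ε ^ 2 / (n * τ.lamMin) := by
        rw [sum_const, card_range, nsmul_eq_mul, τ.n_mul_lamMin]
        ring
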